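/- arXiv:1012.0659 — 5 statements merged into one kernel-verified Lean document; each statement's English description precedes it below -/
import Mathlib

section
/- Let A > 0 and let u : ℝ → ℝ be differentiable on the interval [-1, 1] and satisfy the Riccati equation u'(t) + u(t)^2 + K(t) = 0 on [-1, 1], where K : ℝ → ℝ satisfies K(t) ≥ -A^2 for all t ∈ [-1, 1]. Then |u(0)| ≤ A * cosh(A) / sinh(A). -/
/-! On `[-1, 0]` the equation gives `u' ≤ A² - u²`, so `u` stays below every solution
`A coth (A (t - t₀))`, `t₀ < -1`, of `y' = A² - y²` that starts above it. These solutions blow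
up at `t₀`, so one of them starts above `u (-1)`, and at `t = 0` each is at most `A coth A`
because `coth` decreases on `(0, ∞)`. The lower bound is the same argument applied to
`t ↦ -u (-t)`. -/

open Real Set

noncomputable def scaledCoth (c t : ℝ) : ℝ := c * cosh (c * t) / sinh (c * t)

section

variable {c : ℝ}

lemma scaledCoth_pos (hc : 0 < c) {t : ℝ} (ht : 0 < t) : 0 < scaledCoth c t := by
  have := sinh_pos_iff.2 (mul_pos hc ht)
  unfold scaledCoth
  positivity

lemma hasDerivAt_scaledCoth {t : ℝ} (ht : c * t ≠ 0) :
    HasDerivAt (scaledCoth c) (c ^ 2 - scaledCoth c t ^ 2) t := by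
  have hs : sinh (c * t) ≠ 0 := by simpa using ht
  have hlin : HasDerivAt (fun t => c * t) c t := by simpa using (hasDerivAt_id t).const_mul c
  refine ((((hasDerivAt_cosh _).comp t hlin).const_mul c).div
    ((hasDerivAt_sinh _).comp t hlin) hs).congr_deriv ?_
  simp only [scaledCoth, Function.comp_apply]
  field_simp

lemma scaledCoth_le_scaledCoth (hc : 0 < c) {s t : ℝ} (hs : 0 < s) (hst : s ≤ t) :
    scaledCoth c t ≤ scaledCoth c s := by
  have hsinh_s := sinh_pos_iff.2 (mul_pos hc hs)
  have hsinh_t := sinh_pos_iff.2 (mul_pos hc (hs.trans_le hst))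
  have hsub := sinh_nonneg_iff.2 (sub_nonneg.2 (mul_le_mul_of_nonneg_left hst hc.le))
  rw [sinh_sub] at hsub
  unfold scaledCoth
  rw [div_le_div_iff₀ hsinh_t hsinh_s]
  nlinarith

open Filter Topology in
lemma tendsto_scaledCoth_nhdsGT_zero (hc : 0 < c) :
    Tendsto (scaledCoth c) (𝓝[>] 0) atTop := by
  have hsinh : Tendsto (fun t => sinh (c * t)) (𝓝[>] 0) (𝓝[>] 0) := by
    refine tendsto_nhdsWithin_of_tendsto_nhds_of_eventually_within _ ?_ ?_
    · simpa [Function.comp_def] using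
        ((continuous_sinh.comp (continuous_const_mul c)).tendsto 0).mono_left nhdsWithin_le_nhds
    · filter_upwards [self_mem_nhdsWithin] with t ht using sinh_pos_iff.2 (mul_pos hc ht)
  refine tendsto_atTop_mono' _ ?_ (hsinh.inv_tendsto_nhdsGT_zero.const_mul_atTop hc)
  filter_upwards [self_mem_nhdsWithin] with t ht
  have := sinh_pos_iff.2 (mul_pos hc ht)
  unfold scaledCoth
  rw [Pi.inv_apply, ← div_eq_mul_inv]
  gcongr
  exact le_mul_of_one_le_right hc.le (one_le_cosh _)

variable {a b : ℝ} {u u' : ℝ → ℝ}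

lemma le_scaledCoth_of_riccati_le (hc : 0 < c) (hu : ContinuousOn u (Icc a b))
    (hu' : ∀ t ∈ Ico a b, HasDerivWithinAt u (u' t) (Ici t) t)
    (hric : ∀ t ∈ Ico a b, u' t + u t ^ 2 ≤ c ^ 2) {t₀ : ℝ} (ht₀ : t₀ < a)
    (ha : u a ≤ scaledCoth c (a - t₀)) : ∀ t ∈ Icc a b, u t ≤ scaledCoth c (t - t₀) := by
  intro t ht
  refine le_of_forall_pos_le_add fun ε hε => ?_
  -- Raising the barrier by `ε` makes it a strict supersolution.
  have hB : ∀ s ∈ Icc a b, HasDerivAt (fun s => scaledCoth c (s - t₀) + ε)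
      (c ^ 2 - scaledCoth c (s - t₀) ^ 2) s := fun s hs =>
    ((hasDerivAt_scaledCoth (by nlinarith [hs.1])).comp_sub_const s t₀).add_const ε
  have hpos : ∀ s ∈ Icc a b, 0 < scaledCoth c (s - t₀) := fun s hs =>
    scaledCoth_pos hc (by linarith [hs.1])
  refine image_le_of_deriv_right_lt_deriv_boundary' hu hu' (by linarith)
    (fun s hs => (hB s hs).continuousAt.continuousWithinAt)
    (fun s hs => (hB s (Ico_subset_Icc_self hs)).hasDerivWithinAt) ?_ ht
  intro s hs hus
  have := hpos s (Ico_subset_Icc_self hs)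
  nlinarith [hric s hs]

lemma le_scaledCoth_sub_of_riccati_le (hc : 0 < c) (hab : a < b)
    (hu : ∀ t ∈ Icc a b, HasDerivWithinAt u (u' t) (Icc a b) t)
    (hric : ∀ t ∈ Icc a b, u' t + u t ^ 2 ≤ c ^ 2) : u b ≤ scaledCoth c (b - a) := by
  obtain ⟨σ, hσu, hσ⟩ : ∃ σ, u a ≤ scaledCoth c σ ∧ 0 < σ :=
    ((tendsto_scaledCoth_nhdsGT_zero hc).eventually_ge_atTop (u a)).and self_mem_nhdsWithin
      |>.exists
  have hcomp := le_scaledCoth_of_riccati_le hc (fun t ht => (hu t ht).continuousWithinAt)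
    (fun t ht => (hu t (Ico_subset_Icc_self ht)).mono_of_mem_nhdsWithin
      (Icc_mem_nhdsGE_of_mem ht))
    (fun t ht => hric t (Ico_subset_Icc_self ht)) (sub_lt_self a hσ) (by rwa [sub_sub_cancel])
    b (right_mem_Icc.2 hab.le)
  exact hcomp.trans (scaledCoth_le_scaledCoth hc (sub_pos.2 hab) (by linarith))

end

theorem riccati_midpoint_bound (A : ℝ) (hA : 0 < A) (u u' K : ℝ → ℝ)
    (hderiv : ∀ t ∈ Icc (-1 : ℝ) 1, HasDerivWithinAt u (u' t) (Icc (-1 : ℝ) 1) t)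
    (hriccati : ∀ t ∈ Icc (-1 : ℝ) 1, u' t + (u t) ^ 2 + K t = 0)
    (hK : ∀ t ∈ Icc (-1 : ℝ) 1, -A ^ 2 ≤ K t) :
    |u 0| ≤ A * Real.cosh A / Real.sinh A := by
  have hsub : Icc (-1 : ℝ) 0 ⊆ Icc (-1) 1 := Icc_subset_Icc_right zero_le_one
  have bound : ∀ v v' : ℝ → ℝ, (∀ t ∈ Icc (-1 : ℝ) 1, HasDerivWithinAt v (v' t) (Icc (-1) 1) t) →
      (∀ t ∈ Icc (-1 : ℝ) 1, v' t + v t ^ 2 ≤ A ^ 2) → v 0 ≤ A * cosh A / sinh A :=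
    fun v v' hv hric => by
      simpa [scaledCoth] using le_scaledCoth_sub_of_riccati_le hA neg_one_lt_zero
        (fun t ht => (hv t (hsub ht)).mono hsub) (fun t ht => hric t (hsub ht))
  have hric : ∀ t ∈ Icc (-1 : ℝ) 1, u' t + u t ^ 2 ≤ A ^ 2 := fun t ht => by
    linarith [hriccati t ht, hK t ht]
  have hneg : MapsTo (fun t : ℝ => -t) (Icc (-1) 1) (Icc (-1) 1) := fun t ht =>
    ⟨neg_le_neg ht.2, by linarith [ht.1]⟩
  have upper := bound u u' hderiv hric
  have lower := bound (fun t => -u (-t)) (fun t => u' (-t))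
    (fun t ht => ((hderiv (-t) (hneg ht)).comp t (hasDerivWithinAt_neg t _) hneg).neg.congr_deriv
      (by ring))
    (fun t ht => by simpa using hric (-t) (hneg ht))
  rw [neg_zero] at lower
  exact abs_le.2 ⟨by linarith, upper⟩
end

section
/- Let A > 0 and let u : ℝ → ℝ be differentiable on all of ℝ and satisfy u'(t) + u(t)^2 + K(t) = 0 for all t ∈ ℝ, where K(t) ≥ -A^2 for all t. Then |u(t)| ≤ A for all t ∈ ℝ. -/
/-!
If `u t₀ < -A`, then `y = -A - u` satisfies `y' = u² + K ≥ y² + 2Ay`. The linear part keeps `y`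
positive after `t₀` (compare with `e^{2At}`), and then `y' ≥ y²` makes `1/y + t` nonincreasing,
so `1/y` would reach `0` within time `1/y(t₀)`: `y` blows up in finite time, which a solution
defined on all of `ℝ` cannot do. The upper bound `u ≤ A` is the same argument applied to
`t ↦ -u(-t)`, which solves the Riccati equation for the curvature `t ↦ K(-t)`.
-/

open Real Set

section
variable {y y' : ℝ → ℝ}

theorem monotone_mul_exp_neg_of_mul_le_deriv {c : ℝ} (hy : ∀ t, HasDerivAt y (y' t) t)
    (hc : ∀ t, c * y t ≤ y' t) : Monotone fun t => y t * exp (-(c * t)) := by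
  refine monotone_of_hasDerivAt_nonneg
    (fun t => (hy t).mul ((hasDerivAt_id' t).const_mul c).fun_neg.exp) fun t => ?_
  have := mul_nonneg (sub_nonneg.2 (hc t)) (exp_pos (-(c * t))).le
  simp only [Pi.zero_apply]
  linarith

theorem pos_of_mul_le_deriv {c t₀ t : ℝ} (hy : ∀ t, HasDerivAt y (y' t) t)
    (hc : ∀ t, c * y t ≤ y' t) (h₀ : 0 < y t₀) (ht : t₀ ≤ t) : 0 < y t := by
  have hmono := monotone_mul_exp_neg_of_mul_le_deriv hy hc ht
  have : 0 < y t * exp (-(c * t)) := (mul_pos h₀ (exp_pos _)).trans_le hmono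
  exact pos_of_mul_pos_left this (exp_pos _).le

theorem not_forall_sq_le_deriv {t₀ : ℝ} (hy : ∀ t, HasDerivAt y (y' t) t)
    (hpos : ∀ t, t₀ ≤ t → 0 < y t) : ¬ ∀ t, t₀ ≤ t → y t ^ 2 ≤ y' t := by
  intro hsq
  have hderiv : ∀ t ∈ Ici t₀, HasDerivAt (fun t => (y t)⁻¹ + t) (-y' t / y t ^ 2 + 1) t :=
    fun t ht => ((hy t).inv (hpos t ht).ne').add (hasDerivAt_id t)
  have hanti : AntitoneOn (fun t => (y t)⁻¹ + t) (Ici t₀) := by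
    refine antitoneOn_of_hasDerivWithinAt_nonpos (convex_Ici t₀)
      (fun t ht => (hderiv t ht).continuousAt.continuousWithinAt)
      (fun t ht => (hderiv t (interior_subset ht)).hasDerivWithinAt) fun t ht => ?_
    have ht : t₀ ≤ t := interior_subset ht
    rw [neg_div, neg_add_nonpos_iff, le_div_iff₀ (pow_pos (hpos t ht) 2), one_mul]
    exact hsq t ht
  set T := t₀ + (y t₀)⁻¹
  have hT : t₀ ≤ T := le_add_of_nonneg_right (inv_pos.2 (hpos t₀ le_rfl)).le
  have hdecr : (y T)⁻¹ + T ≤ (y t₀)⁻¹ + t₀ := hanti self_mem_Ici hT hT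
  have := inv_pos.2 (hpos T hT)
  linarith

end

theorem neg_le_of_riccati {A : ℝ} (hA : 0 ≤ A) {u u' K : ℝ → ℝ}
    (hderiv : ∀ t, HasDerivAt u (u' t) t) (hriccati : ∀ t, u' t + u t ^ 2 + K t = 0)
    (hK : ∀ t, -A ^ 2 ≤ K t) (t : ℝ) : -A ≤ u t := by
  by_contra! ht
  set y := fun s => -A - u s
  have hy : ∀ s, HasDerivAt y (-u' s) s := fun s => (hderiv s).const_sub (-A)
  have hcomp : ∀ s, y s ^ 2 + 2 * A * y s ≤ -u' s := fun s => by
    nlinarith [hriccati s, hK s]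
  have hpos : ∀ s, t ≤ s → 0 < y s := fun s =>
    pos_of_mul_le_deriv hy (fun s => by nlinarith [hcomp s, sq_nonneg (y s)])
      (show 0 < -A - u t by linarith)
  exact not_forall_sq_le_deriv hy hpos fun s hs => by nlinarith [hcomp s, hpos s hs]

theorem riccati_global_bound (A : ℝ) (hA : 0 < A) (u u' K : ℝ → ℝ)
    (hderiv : ∀ t : ℝ, HasDerivAt u (u' t) t)
    (hriccati : ∀ t : ℝ, u' t + (u t) ^ 2 + K t = 0)
    (hK : ∀ t : ℝ, -A ^ 2 ≤ K t) :
    ∀ t : ℝ, |u t| ≤ A := by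
  intro t
  have hreflected : ∀ s, HasDerivAt (fun r => -u (-r)) (u' (-s)) s := fun s => by
    simpa using ((hderiv (-s)).comp s (hasDerivAt_neg' s)).fun_neg
  have hupper := neg_le_of_riccati hA.le hreflected (K := fun s => K (-s))
    (fun s => by simpa [neg_sq] using hriccati (-s)) (fun s => hK (-s)) (-t)
  rw [abs_le]
  exact ⟨neg_le_of_riccati hA.le hderiv hriccati hK t, by simpa using hupper⟩
end

section
/- Let F : [0, t] → ℝ be absolutely continuous, nondecreasing, with F(0) > 0, and let ω : [0, t] → ℝ be integrable. Define Ω(s) = ∫₀ˢ ω dℒ and suppose Ω(s) ≥ -M for all s ∈ [0, t], where M ≥ 0. Then ∫₀ᵗ ω(s)/F(s) ds ≥ -M / F(0). -/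
/-!
Let `I x = ∫₀ˣ ω / F` and let `τ` minimise `I` on `[0, t]`. Integration by parts on `[0, τ]`,
together with `F' ≥ 0` and `I ≥ I τ`, gives
`Ω τ = ∫₀^τ F · (ω / F) = F τ · I τ - ∫₀^τ F' · I ≤ F τ · I τ - (F τ - F 0) · I τ = F 0 · I τ`,
so `I t ≥ I τ ≥ Ω τ / F 0 ≥ -M / F 0`. Choosing a minimiser avoids differentiating `1 / F`.
-/

open Set MeasureTheory intervalIntegral

section AddPrimitive

variable {f F : ℝ → ℝ} {a b : ℝ}

theorem le_of_eq_add_primitive_of_nonneg (hf_nonneg : ∀ x, 0 ≤ f x)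
    (hF : ∀ s ∈ Icc a b, F s = F a + ∫ x in a..s, f x) {s : ℝ} (hs : s ∈ Icc a b) :
    F a ≤ F s := by
  have : 0 ≤ ∫ x in a..s, f x := integral_nonneg hs.1 fun x _ ↦ hf_nonneg x
  linarith [hF s hs]

theorem continuousOn_of_eq_add_primitive (hf : IntervalIntegrable f volume a b)
    (hF : ∀ s ∈ Icc a b, F s = F a + ∫ x in a..s, f x) : ContinuousOn F (Icc a b) :=
  ((continuousOn_const.add (hf.absolutelyContinuousOnInterval_intervalIntegral
    left_mem_uIcc).continuousOn).mono Icc_subset_uIcc).congr hF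

end AddPrimitive

theorem intervalIntegral.integral_mul_primitive_add_primitive_mul {f g : ℝ → ℝ} {a b : ℝ}
    (hf : IntervalIntegrable f volume a b) (hg : IntervalIntegrable g volume a b) :
    ∫ x in a..b, (f x * ∫ y in a..x, g y) + (∫ y in a..x, f y) * g x =
      (∫ x in a..b, f x) * ∫ x in a..b, g x := by
  have ha : a ∈ uIcc a b := left_mem_uIcc
  have hparts := (hf.absolutelyContinuousOnInterval_intervalIntegral ha).integral_deriv_mul_eq_sub
    (hg.absolutelyContinuousOnInterval_intervalIntegral ha)
  simp only [integral_same, mul_zero, sub_zero] at hparts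
  rw [← hparts]
  refine integral_congr_ae ?_
  filter_upwards [hf.ae_hasDerivAt_integral, hg.ae_hasDerivAt_integral] with x hfx hgx hx
  have hx' : x ∈ uIcc a b := uIoc_subset_uIcc hx
  rw [(hfx hx' a ha).deriv, (hgx hx' a ha).deriv]

theorem integral_const_add_primitive_mul_le_of_isMinOn {f g : ℝ → ℝ} {a b : ℝ} (c : ℝ)
    (hab : a ≤ b) (hf : IntervalIntegrable f volume a b) (hf_nonneg : ∀ x ∈ Icc a b, 0 ≤ f x)
    (hg : IntervalIntegrable g volume a b)
    (hmin : IsMinOn (fun x ↦ ∫ y in a..x, g y) (Icc a b) b) :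
    ∫ x in a..b, (c + ∫ y in a..x, f y) * g x ≤ c * ∫ x in a..b, g x := by
  set G : ℝ → ℝ := fun x ↦ ∫ y in a..x, g y
  have hfG : IntervalIntegrable (fun x ↦ f x * G x) volume a b :=
    hf.mul_continuousOn
      (hg.absolutelyContinuousOnInterval_intervalIntegral left_mem_uIcc).continuousOn
  have hFg : IntervalIntegrable (fun x ↦ (∫ y in a..x, f y) * g x) volume a b :=
    hg.continuousOn_mul
      (hf.absolutelyContinuousOnInterval_intervalIntegral left_mem_uIcc).continuousOn
  have hlower : (∫ x in a..b, f x) * G b ≤ ∫ x in a..b, f x * G x := by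
    rw [← intervalIntegral.integral_mul_const]
    exact integral_mono_on hab (hf.mul_const _) hfG
      fun x hx ↦ mul_le_mul_of_nonneg_left (hmin hx) (hf_nonneg x hx)
  have hparts := integral_mul_primitive_add_primitive_mul hf hg
  rw [integral_add hfG hFg] at hparts
  simp only [add_mul]
  rw [integral_add (hg.const_mul c) hFg, intervalIntegral.integral_const_mul]
  linarith

theorem integral_omega_div_F_lower_bound_general (t M : ℝ) (ht : 0 ≤ t)
    (F F' ω : ℝ → ℝ)
    (hF0 : 0 < F 0)
    (hF'nonneg : ∀ x, 0 ≤ F' x)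
    (hF'int : IntervalIntegrable F' MeasureTheory.volume 0 t)
    (hFac : ∀ s ∈ Icc (0 : ℝ) t, F s = F 0 + ∫ x in (0 : ℝ)..s, F' x)
    (hωint : IntervalIntegrable ω MeasureTheory.volume 0 t)
    (hΩ : ∀ s ∈ Icc (0 : ℝ) t, -M ≤ ∫ x in (0 : ℝ)..s, ω x) :
    -M / F 0 ≤ ∫ s in (0 : ℝ)..t, ω s / F s := by
  have hIcc : uIcc 0 t = Icc 0 t := uIcc_of_le ht
  have hFpos : ∀ s ∈ Icc 0 t, 0 < F s := fun s hs ↦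
    hF0.trans_le (le_of_eq_add_primitive_of_nonneg hF'nonneg hFac hs)
  have hFcont : ContinuousOn F (Icc 0 t) := continuousOn_of_eq_add_primitive hF'int hFac
  have hq : IntervalIntegrable (fun s ↦ ω s / F s) volume 0 t := by
    simpa only [div_eq_mul_inv] using
      hωint.mul_continuousOn (hIcc ▸ hFcont.inv₀ fun s hs ↦ (hFpos s hs).ne')
  obtain ⟨τ, hτ, hmin⟩ := isCompact_Icc.exists_isMinOn (nonempty_Icc.2 ht)
    (hIcc ▸ (hq.absolutelyContinuousOnInterval_intervalIntegral left_mem_uIcc).continuousOn)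
  have hsub : uIcc 0 τ ⊆ uIcc 0 t := uIcc_subset_uIcc_left (hIcc ▸ hτ)
  have hbound := integral_const_add_primitive_mul_le_of_isMinOn (F 0) hτ.1
    (hF'int.mono_set hsub) (fun x _ ↦ hF'nonneg x) (hq.mono_set hsub)
    (hmin.on_subset (Icc_subset_Icc_right hτ.2))
  have hΩτ : ∫ x in (0 : ℝ)..τ, (F 0 + ∫ y in (0 : ℝ)..x, F' y) * (ω x / F x) =
      ∫ x in (0 : ℝ)..τ, ω x := integral_congr fun x hx ↦ by
    have hx' : x ∈ Icc 0 t := hIcc ▸ hsub hx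
    rw [← hFac x hx', mul_div_cancel₀ _ (hFpos x hx').ne']
  calc -M / F 0 ≤ ∫ x in (0 : ℝ)..τ, ω x / F x := by
        rw [div_le_iff₀ hF0]
        linarith [hΩ τ hτ]
    _ ≤ ∫ s in (0 : ℝ)..t, ω s / F s := hmin (right_mem_Icc.2 ht)

theorem integral_omega_div_F_lower_bound (t M : ℝ) (ht : 0 ≤ t) (hM : 0 ≤ M)
    (F F' ω : ℝ → ℝ)
    (hF0 : 0 < F 0)
    (hF'nonneg : ∀ x, 0 ≤ F' x)
    (hF'int : IntervalIntegrable F' MeasureTheory.volume 0 t)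
    (hFac : ∀ s ∈ Icc (0 : ℝ) t, F s = F 0 + ∫ x in (0 : ℝ)..s, F' x)
    (hωint : IntervalIntegrable ω MeasureTheory.volume 0 t)
    (hΩ : ∀ s ∈ Icc (0 : ℝ) t, -M ≤ ∫ x in (0 : ℝ)..s, ω x) :
    -M / F 0 ≤ ∫ s in (0 : ℝ)..t, ω s / F s :=
  integral_omega_div_F_lower_bound_general t M ht F F' ω hF0 hF'nonneg hF'int hFac hωint hΩ
end

section
/- Let F : [0, ∞) → (0, ∞) be absolutely continuous and nondecreasing, let h : [0, ∞) → [0, ∞) be continuous, let ω : [0, ∞) → ℝ be locally integrable with ∫₀ˢ ω dℒ ≥ -h(s) for all s ≥ 0, let v(t) = v(0) + ∫₀ᵗ h dℒ with v(0) ≥ 0, and suppose that for almost every t ≥ 0: F(t) ≤ -2π ω(t) + 2 (2π F'(t) h(t))^{1/2}. Then for every t ≥ 0: (8π / F(0))^{1/2} · v(t)^{1/2} ≥ t - (2π / F(0)) · max_{s ∈ [0,t]} h(s). -/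
/-!
Divide the fundamental inequality by `F` and integrate over `[0, t]`:
`t ≤ -2π ∫ ω / F + 2 ∫ √(2π (F' / F²) h)`.
Since `1 / F` is absolutely continuous with derivative `-F' / F²`, integrating by parts against
`Ω(x) = ∫₀ˣ ω ≥ -h(x) ≥ -M`, where `M = max_{[0,t]} h`, gives `∫ ω / F ≥ -M / F(0)`.
By Cauchy–Schwarz and `∫₀ᵗ F' / F² = 1 / F(0) - 1 / F(t) ≤ 1 / F(0)`, the second integral is at
most `√(2π / F(0)) · √(∫₀ᵗ h) ≤ √(2π / F(0)) · √(v(t))`.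
-/

open Set MeasureTheory Real Filter
open scoped NNReal Interval Topology

section CauchySchwarz
variable {α : Type*} [MeasurableSpace α] {μ : Measure α} {f g : α → ℝ}

lemma MeasureTheory.Integrable.memLp_two_sqrt (hf : Integrable f μ) (hf0 : 0 ≤ᵐ[μ] f) :
    MemLp (fun x ↦ √(f x)) 2 μ := by
  refine (memLp_two_iff_integrable_sq hf.aemeasurable.sqrt.aestronglyMeasurable).2 ?_
  refine hf.congr ?_
  filter_upwards [hf0] with x hx
  exact (sq_sqrt hx).symm

lemma MeasureTheory.Integrable.sqrt_mul (hf : Integrable f μ) (hg : Integrable g μ)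
    (hf0 : 0 ≤ᵐ[μ] f) (hg0 : 0 ≤ᵐ[μ] g) : Integrable (fun x ↦ √(f x * g x)) μ := by
  refine ((hf.memLp_two_sqrt hf0).integrable_mul (hg.memLp_two_sqrt hg0)).congr ?_
  filter_upwards [hf0] with x hx
  exact (Real.sqrt_mul hx _).symm

lemma MeasureTheory.integral_sqrt_mul_le (hf : Integrable f μ) (hg : Integrable g μ)
    (hf0 : 0 ≤ᵐ[μ] f) (hg0 : 0 ≤ᵐ[μ] g) :
    ∫ x, √(f x * g x) ∂μ ≤ √(∫ x, f x ∂μ) * √(∫ x, g x ∂μ) := by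
  have holder := integral_mul_le_Lp_mul_Lq_of_nonneg (μ := μ) Real.HolderConjugate.two_two
    (f := fun x ↦ √(f x)) (g := fun x ↦ √(g x)) (.of_forall fun _ ↦ sqrt_nonneg _)
    (.of_forall fun _ ↦ sqrt_nonneg _) (by simpa using hf.memLp_two_sqrt hf0)
    (by simpa using hg.memLp_two_sqrt hg0)
  have sq_integral {u : α → ℝ} (hu0 : 0 ≤ᵐ[μ] u) :
      (∫ x, √(u x) ^ (2 : ℝ) ∂μ) ^ (1 / (2 : ℝ)) = √(∫ x, u x ∂μ) := by
    rw [sqrt_eq_rpow]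
    congr 1
    refine integral_congr_ae ?_
    filter_upwards [hu0] with x hx
    simp [sq_sqrt hx]
  rw [sq_integral hf0, sq_integral hg0] at holder
  refine le_of_eq_of_le (integral_congr_ae ?_) holder
  filter_upwards [hf0] with x hx
  exact sqrt_mul hx _

lemma IntervalIntegrable.sqrt_mul {f g : ℝ → ℝ} {a b : ℝ}
    (hf : IntervalIntegrable f volume a b) (hg : IntervalIntegrable g volume a b)
    (hf0 : ∀ x ∈ Ι a b, 0 ≤ f x) (hg0 : ∀ x ∈ Ι a b, 0 ≤ g x) :
    IntervalIntegrable (fun x ↦ √(f x * g x)) volume a b := by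
  have nonneg {u : ℝ → ℝ} {s : Set ℝ} (hs : s ⊆ Ι a b) (hu : ∀ x ∈ Ι a b, 0 ≤ u x)
      (hms : MeasurableSet s) : 0 ≤ᵐ[volume.restrict s] u :=
    ae_restrict_of_forall_mem hms fun x hx ↦ hu x (hs hx)
  exact ⟨hf.1.sqrt_mul hg.1 (nonneg Ioc_subset_uIoc hf0 measurableSet_Ioc)
      (nonneg Ioc_subset_uIoc hg0 measurableSet_Ioc),
    hf.2.sqrt_mul hg.2 (nonneg Ioc_subset_uIoc' hf0 measurableSet_Ioc)
      (nonneg Ioc_subset_uIoc' hg0 measurableSet_Ioc)⟩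

lemma intervalIntegral.integral_sqrt_mul_le {f g : ℝ → ℝ} {a b : ℝ} (hab : a ≤ b)
    (hf : IntervalIntegrable f volume a b) (hg : IntervalIntegrable g volume a b)
    (hf0 : ∀ x ∈ Ι a b, 0 ≤ f x) (hg0 : ∀ x ∈ Ι a b, 0 ≤ g x) :
    ∫ x in a..b, √(f x * g x) ≤ √(∫ x in a..b, f x) * √(∫ x in a..b, g x) := by
  rw [uIoc_of_le hab] at hf0 hg0
  simp only [intervalIntegral.integral_of_le hab]
  exact MeasureTheory.integral_sqrt_mul_le hf.1 hg.1 (ae_restrict_of_forall_mem measurableSet_Ioc hf0)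
    (ae_restrict_of_forall_mem measurableSet_Ioc hg0)

end CauchySchwarz

lemma lipschitzOnWith_inv_Ici {c : ℝ} (hc : 0 < c) :
    LipschitzOnWith (c ^ 2)⁻¹.toNNReal (fun x : ℝ ↦ x⁻¹) (Ici c) := by
  refine LipschitzOnWith.of_dist_le_mul fun x (hx : c ≤ x) y (hy : c ≤ y) ↦ ?_
  rw [dist_inv_inv₀ (hc.trans_le hx).ne' (hc.trans_le hy).ne',
    Real.coe_toNNReal _ (by positivity), div_eq_inv_mul, Real.norm_of_nonneg (hc.le.trans hx),
    Real.norm_of_nonneg (hc.le.trans hy)]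
  gcongr
  nlinarith

namespace AbsolutelyContinuousOnInterval
variable {X Y : Type*} [PseudoMetricSpace X] [PseudoMetricSpace Y] {f g : ℝ → X} {a b : ℝ}

theorem congr (hf : AbsolutelyContinuousOnInterval f a b) (hfg : EqOn f g (uIcc a b)) :
    AbsolutelyContinuousOnInterval g a b := by
  refine hf.congr' ?_
  filter_upwards [eventually_inf_principal.2 (.of_forall fun E hE ↦ hE)] with E hE
  refine Finset.sum_congr rfl fun i hi ↦ ?_
  rw [hfg (hE.1 i hi).1, hfg (hE.1 i hi).2]

theorem _root_.LipschitzOnWith.comp_absolutelyContinuousOnInterval {φ : X → Y} {K : ℝ≥0}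
    {s : Set X} (hφ : LipschitzOnWith K φ s) (hf : AbsolutelyContinuousOnInterval f a b)
    (hfs : MapsTo f (uIcc a b) s) : AbsolutelyContinuousOnInterval (φ ∘ f) a b := by
  have hK : Tendsto (fun E : ℕ × (ℕ → ℝ × ℝ) ↦
      K * ∑ i ∈ Finset.range E.1, dist (f (E.2 i).1) (f (E.2 i).2))
      (totalLengthFilter ⊓ 𝓟 (disjWithin a b)) (𝓝 0) := by
    simpa using Tendsto.const_mul (K : ℝ) hf
  refine squeeze_zero' (.of_forall fun _ ↦ Finset.sum_nonneg fun _ _ ↦ dist_nonneg) ?_ hK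
  filter_upwards [eventually_inf_principal.2 (.of_forall fun E hE ↦ hE)] with E hE
  rw [Finset.mul_sum]
  exact Finset.sum_le_sum fun i hi ↦
    hφ.dist_le_mul _ (hfs (hE.1 i hi).1) _ (hfs (hE.1 i hi).2)

theorem inv {f : ℝ → ℝ} (hf : AbsolutelyContinuousOnInterval f a b)
    (hpos : ∀ x ∈ uIcc a b, 0 < f x) :
    AbsolutelyContinuousOnInterval (fun x ↦ (f x)⁻¹) a b := by
  obtain ⟨x₀, hx₀, hmin⟩ := isCompact_uIcc.exists_isMinOn nonempty_uIcc hf.continuousOn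
  exact (lipschitzOnWith_inv_Ici (hpos x₀ hx₀)).comp_absolutelyContinuousOnInterval hf
    fun x hx ↦ hmin hx

end AbsolutelyContinuousOnInterval

section Primitive
variable {F F' : ℝ → ℝ} {a b : ℝ}

theorem absolutelyContinuousOnInterval_of_eq_primitive (hF' : IntervalIntegrable F' volume a b)
    (hF : ∀ x ∈ uIcc a b, F x = F a + ∫ y in a..x, F' y) :
    AbsolutelyContinuousOnInterval F a b := by
  have hprim := hF'.absolutelyContinuousOnInterval_intervalIntegral left_mem_uIcc
  have : AbsolutelyContinuousOnInterval (fun x ↦ F a + ∫ y in a..x, F' y) a b := by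
    simpa only [AbsolutelyContinuousOnInterval, dist_add_left] using hprim
  exact this.congr fun x hx ↦ (hF x hx).symm

theorem ae_hasDerivAt_of_eq_primitive (hab : a ≤ b) (hF' : IntervalIntegrable F' volume a b)
    (hF : ∀ x ∈ Icc a b, F x = F a + ∫ y in a..x, F' y) :
    ∀ᵐ x, x ∈ Ι a b → HasDerivAt F (F' x) x := by
  have hb : ∀ᵐ x, x ≠ b := by simp [ae_iff, measure_singleton]
  filter_upwards [hF'.ae_hasDerivAt_integral, hb] with x hderiv hxb hx
  have hx' : x ∈ Ioo a b := by
    rw [uIoc_of_le hab] at hx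
    exact ⟨hx.1, lt_of_le_of_ne hx.2 hxb⟩
  refine ((hderiv (uIoc_subset_uIcc hx) a left_mem_uIcc).const_add (F a)).congr_of_eventuallyEq ?_
  filter_upwards [Ioo_mem_nhds hx'.1 hx'.2] with y hy using hF y (Ioo_subset_Icc_self hy)

theorem ae_hasDerivAt_inv_of_eq_primitive (hab : a ≤ b) (hF' : IntervalIntegrable F' volume a b)
    (hF : ∀ x ∈ Icc a b, F x = F a + ∫ y in a..x, F' y) (hpos : ∀ x ∈ Icc a b, 0 < F x) :
    ∀ᵐ x, x ∈ Ι a b → HasDerivAt (fun x ↦ (F x)⁻¹) (-(F' x / F x ^ 2)) x := by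
  filter_upwards [ae_hasDerivAt_of_eq_primitive hab hF' hF] with x hx hmem
  exact (hx hmem).inv (hpos x (Ioc_subset_Icc_self (uIoc_of_le hab ▸ hmem))).ne' |>.congr_deriv
    (neg_div _ _)

theorem absolutelyContinuousOnInterval_inv_of_eq_primitive (hab : a ≤ b)
    (hF' : IntervalIntegrable F' volume a b)
    (hF : ∀ x ∈ Icc a b, F x = F a + ∫ y in a..x, F' y)
    (hpos : ∀ x ∈ Icc a b, 0 < F x) :
    AbsolutelyContinuousOnInterval (fun x ↦ (F x)⁻¹) a b :=
  (absolutelyContinuousOnInterval_of_eq_primitive hF' (uIcc_of_le hab ▸ hF)).inv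
    (uIcc_of_le hab ▸ hpos)

theorem integral_div_sq_eq_inv_sub_inv (hab : a ≤ b) (hF' : IntervalIntegrable F' volume a b)
    (hF : ∀ x ∈ Icc a b, F x = F a + ∫ y in a..x, F' y) (hpos : ∀ x ∈ Icc a b, 0 < F x) :
    ∫ x in a..b, F' x / F x ^ 2 = (F a)⁻¹ - (F b)⁻¹ := by
  have hFTC :=
    (absolutelyContinuousOnInterval_inv_of_eq_primitive hab hF' hF hpos).integral_deriv_eq_sub
  have hderiv : ∀ᵐ x, x ∈ Ι a b → deriv (fun x ↦ (F x)⁻¹) x = -(F' x / F x ^ 2) := by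
    filter_upwards [ae_hasDerivAt_inv_of_eq_primitive hab hF' hF hpos] with x hx hmem
    exact (hx hmem).deriv
  rw [intervalIntegral.integral_congr_ae hderiv, intervalIntegral.integral_neg] at hFTC
  linarith

theorem integral_div_eq_of_eq_primitive {ω : ℝ → ℝ} (hab : a ≤ b)
    (hF' : IntervalIntegrable F' volume a b)
    (hF : ∀ x ∈ Icc a b, F x = F a + ∫ y in a..x, F' y)
    (hpos : ∀ x ∈ Icc a b, 0 < F x) (hω : IntervalIntegrable ω volume a b) :
    ∫ x in a..b, ω x / F x =
      (∫ x in a..b, ω x) / F b + ∫ x in a..b, (∫ y in a..x, ω y) * (F' x / F x ^ 2) := by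
  have hΩ := hω.absolutelyContinuousOnInterval_intervalIntegral left_mem_uIcc
  have hparts := (absolutelyContinuousOnInterval_inv_of_eq_primitive hab hF' hF hpos)
    |>.integral_mul_deriv_eq_deriv_mul hΩ
  have hdΩ :
      ∀ᵐ x, x ∈ Ι a b → (F x)⁻¹ * deriv (fun x ↦ ∫ y in a..x, ω y) x = ω x / F x := by
    filter_upwards [hω.ae_hasDerivAt_integral] with x hx hmem
    rw [(hx (uIoc_subset_uIcc hmem) a left_mem_uIcc).deriv, div_eq_inv_mul]
  have hdG : ∀ᵐ x, x ∈ Ι a b → deriv (fun x ↦ (F x)⁻¹) x * (∫ y in a..x, ω y) =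
      -((∫ y in a..x, ω y) * (F' x / F x ^ 2)) := by
    filter_upwards [ae_hasDerivAt_inv_of_eq_primitive hab hF' hF hpos] with x hx hmem
    rw [(hx hmem).deriv]
    ring
  rw [intervalIntegral.integral_congr_ae hdΩ, intervalIntegral.integral_congr_ae hdG,
    intervalIntegral.integral_neg, intervalIntegral.integral_same] at hparts
  rw [hparts]
  ring

theorem intervalIntegrable_div_of_eq_primitive {ω : ℝ → ℝ} (hab : a ≤ b)
    (hF' : IntervalIntegrable F' volume a b)
    (hF : ∀ x ∈ Icc a b, F x = F a + ∫ y in a..x, F' y)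
    (hpos : ∀ x ∈ Icc a b, 0 < F x) (hω : IntervalIntegrable ω volume a b) :
    IntervalIntegrable (fun x ↦ ω x / F x) volume a b := by
  simpa only [div_eq_mul_inv] using hω.mul_continuousOn
    (absolutelyContinuousOnInterval_inv_of_eq_primitive hab hF' hF hpos).continuousOn

theorem intervalIntegrable_div_sq_of_eq_primitive (hab : a ≤ b)
    (hF' : IntervalIntegrable F' volume a b)
    (hF : ∀ x ∈ Icc a b, F x = F a + ∫ y in a..x, F' y)
    (hpos : ∀ x ∈ Icc a b, 0 < F x) :
    IntervalIntegrable (fun x ↦ F' x / F x ^ 2) volume a b := by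
  simpa only [div_eq_mul_inv, inv_pow, Pi.pow_apply] using hF'.mul_continuousOn
    ((absolutelyContinuousOnInterval_inv_of_eq_primitive hab hF' hF hpos).continuousOn.pow 2)

theorem neg_div_le_integral_div {ω : ℝ → ℝ} {M : ℝ} (hab : a ≤ b)
    (hF'0 : ∀ x ∈ Icc a b, 0 ≤ F' x) (hF' : IntervalIntegrable F' volume a b)
    (hF : ∀ x ∈ Icc a b, F x = F a + ∫ y in a..x, F' y) (hpos : ∀ x ∈ Icc a b, 0 < F x)
    (hω : IntervalIntegrable ω volume a b) (hΩ : ∀ x ∈ Icc a b, -M ≤ ∫ y in a..x, ω y) :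
    -M / F a ≤ ∫ x in a..b, ω x / F x := by
  have hg := intervalIntegrable_div_sq_of_eq_primitive hab hF' hF hpos
  have hΩg : IntervalIntegrable (fun x ↦ (∫ y in a..x, ω y) * (F' x / F x ^ 2)) volume a b :=
    hg.continuousOn_mul
      (hω.absolutelyContinuousOnInterval_intervalIntegral left_mem_uIcc).continuousOn
  have hinterior : ∫ x in a..b, -M * (F' x / F x ^ 2) ≤
      ∫ x in a..b, (∫ y in a..x, ω y) * (F' x / F x ^ 2) :=
    intervalIntegral.integral_mono_on hab (hg.const_mul _) hΩg fun x hx ↦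
      mul_le_mul_of_nonneg_right (hΩ x hx) (div_nonneg (hF'0 x hx) (sq_nonneg _))
  have hboundary : -M / F b ≤ (∫ x in a..b, ω x) / F b :=
    div_le_div_of_nonneg_right (hΩ b (right_mem_Icc.2 hab)) (hpos b (right_mem_Icc.2 hab)).le
  rw [intervalIntegral.integral_const_mul, integral_div_sq_eq_inv_sub_inv hab hF' hF hpos]
    at hinterior
  rw [integral_div_eq_of_eq_primitive hab hF' hF hpos hω]
  calc -M / F a = -M / F b + -M * ((F a)⁻¹ - (F b)⁻¹) := by ring
    _ ≤ _ := add_le_add hboundary hinterior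

theorem integral_sqrt_mul_div_sq_le {h : ℝ → ℝ} {c : ℝ} (hc : 0 ≤ c) (hab : a ≤ b)
    (hF'0 : ∀ x ∈ Icc a b, 0 ≤ F' x) (hF' : IntervalIntegrable F' volume a b)
    (hF : ∀ x ∈ Icc a b, F x = F a + ∫ y in a..x, F' y) (hpos : ∀ x ∈ Icc a b, 0 < F x)
    (hh : IntervalIntegrable h volume a b) (hh0 : ∀ x ∈ Icc a b, 0 ≤ h x) :
    ∫ x in a..b, √(c * (F' x / F x ^ 2) * h x) ≤ √(c / F a) * √(∫ x in a..b, h x) := by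
  have hmem : ∀ x ∈ Ι a b, x ∈ Icc a b := fun x hx ↦ uIcc_of_le hab ▸ uIoc_subset_uIcc hx
  refine (intervalIntegral.integral_sqrt_mul_le hab
    ((intervalIntegrable_div_sq_of_eq_primitive hab hF' hF hpos).const_mul c) hh
    (fun x hx ↦ mul_nonneg hc (div_nonneg (hF'0 x (hmem x hx)) (sq_nonneg _)))
    fun x hx ↦ hh0 x (hmem x hx)).trans ?_
  rw [intervalIntegral.integral_const_mul, integral_div_sq_eq_inv_sub_inv hab hF' hF hpos,
    div_eq_mul_inv]
  gcongr
  exact sub_le_self _ (inv_pos.2 (hpos b (right_mem_Icc.2 hab))).le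

theorem sub_le_integral_of_fundamental_inequality {h ω : ℝ → ℝ} (hab : a ≤ b)
    (hF'0 : ∀ x ∈ Icc a b, 0 ≤ F' x) (hF' : IntervalIntegrable F' volume a b)
    (hF : ∀ x ∈ Icc a b, F x = F a + ∫ y in a..x, F' y) (hpos : ∀ x ∈ Icc a b, 0 < F x)
    (hh : IntervalIntegrable h volume a b) (hh0 : ∀ x ∈ Icc a b, 0 ≤ h x)
    (hω : IntervalIntegrable ω volume a b)
    (hfund : ∀ᵐ x, x ∈ Icc a b → F x ≤ -2 * π * ω x + 2 * √(2 * π * F' x * h x)) :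
    b - a ≤ -2 * π * (∫ x in a..b, ω x / F x) +
      2 * ∫ x in a..b, √(2 * π * (F' x / F x ^ 2) * h x) := by
  have hmem : ∀ x ∈ Ι a b, x ∈ Icc a b := fun x hx ↦ uIcc_of_le hab ▸ uIoc_subset_uIcc hx
  have hωF := intervalIntegrable_div_of_eq_primitive hab hF' hF hpos hω
  have hψ := ((intervalIntegrable_div_sq_of_eq_primitive hab hF' hF hpos).const_mul (2 * π)
    ).sqrt_mul hh (fun x hx ↦ mul_nonneg two_pi_pos.le (div_nonneg (hF'0 x (hmem x hx))
      (sq_nonneg _))) fun x hx ↦ hh0 x (hmem x hx)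
  have hdivided : ∀ᵐ x ∂volume.restrict (Icc a b),
      1 ≤ -2 * π * (ω x / F x) + 2 * √(2 * π * (F' x / F x ^ 2) * h x) := by
    rw [ae_restrict_iff' measurableSet_Icc]
    filter_upwards [hfund] with x hx hx_mem
    have hFx := hpos x hx_mem
    have hsqrt : √(2 * π * (F' x / F x ^ 2) * h x) = √(2 * π * F' x * h x) / F x := by
      rw [show 2 * π * (F' x / F x ^ 2) * h x = 2 * π * F' x * h x / F x ^ 2 by ring,
        sqrt_div' _ (sq_nonneg _), sqrt_sq hFx.le]
    calc (1 : ℝ) ≤ (-2 * π * ω x + 2 * √(2 * π * F' x * h x)) / F x :=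
          (one_le_div hFx).2 (hx hx_mem)
      _ = _ := by rw [hsqrt]; ring
  have hint := intervalIntegral.integral_mono_ae_restrict hab intervalIntegrable_const
    ((hωF.const_mul _).add (hψ.const_mul 2)) hdivided
  rwa [intervalIntegral.integral_const, intervalIntegral.integral_add (hωF.const_mul _)
    (hψ.const_mul 2), intervalIntegral.integral_const_mul, intervalIntegral.integral_const_mul,
    smul_eq_mul, mul_one] at hint

end Primitive

theorem fundamental_inequality_consequence
    (F F' h ω v : ℝ → ℝ)
    (hFpos : ∀ t : ℝ, 0 ≤ t → 0 < F t)
    (hF'nonneg : ∀ x, 0 ≤ F' x)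
    (hF'int : ∀ t : ℝ, 0 ≤ t → IntervalIntegrable F' MeasureTheory.volume 0 t)
    (hFac : ∀ t : ℝ, 0 ≤ t → F t = F 0 + ∫ x in (0 : ℝ)..t, F' x)
    (hhcont : Continuous h) (hhnonneg : ∀ t : ℝ, 0 ≤ t → 0 ≤ h t)
    (hωint : ∀ t : ℝ, 0 ≤ t → IntervalIntegrable ω MeasureTheory.volume 0 t)
    (hωh : ∀ s : ℝ, 0 ≤ s → -h s ≤ ∫ x in (0 : ℝ)..s, ω x)
    (hv0 : 0 ≤ v 0)
    (hv : ∀ t : ℝ, 0 ≤ t → v t = v 0 + ∫ x in (0 : ℝ)..t, h x)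
    (hfund : ∀ᵐ t ∂(MeasureTheory.volume : Measure ℝ), 0 ≤ t →
      F t ≤ -2 * π * ω t + 2 * Real.sqrt (2 * π * F' t * h t)) :
    ∀ t : ℝ, 0 ≤ t →
      t - (2 * π / F 0) * sSup (h '' Icc (0 : ℝ) t) ≤
        Real.sqrt (8 * π / F 0) * Real.sqrt (v t) := by
  intro t ht
  set M := sSup (h '' Icc (0 : ℝ) t)
  have hM : ∀ s ∈ Icc 0 t, h s ≤ M := fun s hs ↦
    le_csSup (isCompact_Icc.image hhcont).bddAbove (mem_image_of_mem h hs)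
  have hF : ∀ x ∈ Icc 0 t, F x = F 0 + ∫ y in (0 : ℝ)..x, F' y := fun x hx ↦ hFac x hx.1
  have hpos : ∀ x ∈ Icc 0 t, 0 < F x := fun x hx ↦ hFpos x hx.1
  have hh0 : ∀ x ∈ Icc 0 t, 0 ≤ h x := fun x hx ↦ hhnonneg x hx.1
  have hmain := sub_le_integral_of_fundamental_inequality ht (fun x _ ↦ hF'nonneg x) (hF'int t ht)
    hF hpos (hhcont.intervalIntegrable 0 t) hh0 (hωint t ht)
    (by filter_upwards [hfund] with x hx hx_mem using hx hx_mem.1)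
  have hω := neg_div_le_integral_div (M := M) ht (fun x _ ↦ hF'nonneg x) (hF'int t ht) hF hpos
    (hωint t ht) fun x hx ↦ (neg_le_neg (hM x hx)).trans (hωh x hx.1)
  have hψ := integral_sqrt_mul_div_sq_le two_pi_pos.le ht (fun x _ ↦ hF'nonneg x) (hF'int t ht)
    hF hpos (hhcont.intervalIntegrable 0 t) hh0
  have hv_le : √(∫ x in (0 : ℝ)..t, h x) ≤ √(v t) := sqrt_le_sqrt (by linarith [hv t ht])
  have h8 : √(8 * π / F 0) = 2 * √(2 * π / F 0) := by
    rw [show 8 * π / F 0 = 2 ^ 2 * (2 * π / F 0) by ring, sqrt_mul (by norm_num),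
      sqrt_sq zero_le_two]
  rw [h8]
  linear_combination hmain + 2 * π * hω + 2 * hψ + 2 * √(2 * π / F 0) * hv_le
end

section
/- Let X be a metric space, f : X → ℝ a 1-Lipschitz function, S ⊆ X, and R > 0. Suppose that for every r in an interval (a, a + R) ⊆ ℝ the level set S ∩ f^{-1}({r}) contains at least two points. Then the 1-dimensional Hausdorff measure of S satisfies H¹(S) ≥ 2R. -/
/-!
Eilenberg's inequality: cover `S` by countably many small sets `t n` with `∑ ediam (t n)` close
to `μH[1] S`, and count, for each level `r`, the pieces whose `f`-image contains `r`. The integral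
of this count is at most `∑ ediam (f '' t n) ≤ K ∑ ediam (t n)`, and once the mesh is below the
separation of finitely many points of `S ∩ f ⁻¹' {r}`, they lie in distinct pieces. Fatou's lemma
along finer and finer covers therefore bounds `∫⁻ r, #(S ∩ f ⁻¹' {r})` by `K μH[1] S`, and a
count of at least two on an interval of length `R` forces `μH[1] S ≥ 2R`.
-/

open Set MeasureTheory Filter Metric
open scoped ENNReal NNReal Topology

theorem Set.toENNReal_encard_le_of_forall_finset {α : Type*} {s : Set α} {L : ℝ≥0∞}
    (h : ∀ F : Finset α, ↑F ⊆ s → (F.card : ℝ≥0∞) ≤ L) : (s.encard : ℝ≥0∞) ≤ L := by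
  rcases s.finite_or_infinite with hs | hs
  · simpa [hs.encard_eq_coe_toFinset_card] using h hs.toFinset (by simp)
  · rw [hs.encard_eq, ENat.toENNReal_top, top_le_iff]
    by_contra hL
    obtain ⟨n, hn⟩ := ENNReal.exists_nat_gt hL
    obtain ⟨F, hFs, hF⟩ := hs.exists_subset_card_eq n
    exact (h F hFs).not_gt (hF ▸ hn)

section CoverMultiplicity

variable {X : Type*}

/-- Images are replaced by their measurable hulls, which have the same volume, so that the count
is measurable in `r`. -/
noncomputable def coverMultiplicity (f : X → ℝ) (t : ℕ → Set X) (r : ℝ) : ℝ≥0∞ :=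
  ∑' n, (toMeasurable volume (f '' t n)).indicator 1 r

theorem measurable_coverMultiplicity (f : X → ℝ) (t : ℕ → Set X) :
    Measurable (coverMultiplicity f t) :=
  .tsum fun _ => measurable_one.indicator (measurableSet_toMeasurable _ _)

theorem lintegral_coverMultiplicity_le [PseudoEMetricSpace X] {K : ℝ≥0} {f : X → ℝ}
    (hf : LipschitzWith K f) (t : ℕ → Set X) :
    ∫⁻ r, coverMultiplicity f t r ≤ K * ∑' n, ediam (t n) := by
  simp only [coverMultiplicity]
  rw [lintegral_tsum fun n =>
    (measurable_one.indicator (measurableSet_toMeasurable _ _)).aemeasurable,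
    ← ENNReal.tsum_mul_left]
  refine ENNReal.tsum_le_tsum fun n => ?_
  calc ∫⁻ r, (toMeasurable volume (f '' t n)).indicator 1 r
      = volume (f '' t n) := by
        rw [lintegral_indicator_one (measurableSet_toMeasurable _ _), measure_toMeasurable]
    _ ≤ ediam (f '' t n) := Real.volume_le_diam _
    _ ≤ K * ediam (t n) := hf.ediam_image_le _

theorem card_le_coverMultiplicity [PseudoEMetricSpace X] {f : X → ℝ} {t : ℕ → Set X}
    {F : Finset X} {r : ℝ} {δ : ℝ≥0∞} (hcov : ↑F ⊆ ⋃ n, t n) (hlevel : ∀ x ∈ F, f x = r)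
    (hmesh : ∀ n, ediam (t n) ≤ δ) (hsep : ∀ x ∈ F, ∀ y ∈ F, x ≠ y → δ < edist x y) :
    (F.card : ℝ≥0∞) ≤ coverMultiplicity f t r := by
  choose! i hi using fun x (hx : x ∈ F) => mem_iUnion.1 (hcov hx)
  have hinj : InjOn i F := fun x hx y hy hxy => by
    by_contra hne
    exact (hsep x hx y hy hne).not_ge
      ((edist_le_ediam_of_mem (hi x hx) (hxy ▸ hi y hy)).trans (hmesh _))
  calc (F.card : ℝ≥0∞)
      = ∑ n ∈ F.image i, (toMeasurable volume (f '' t n)).indicator 1 r := by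
        rw [← Finset.card_image_of_injOn hinj, Finset.cast_card]
        refine Finset.sum_congr rfl fun n hn => ?_
        obtain ⟨x, hx, rfl⟩ := Finset.mem_image.1 hn
        have hr : r ∈ f '' t (i x) := hlevel x hx ▸ mem_image_of_mem f (hi x hx)
        rw [indicator_of_mem (subset_toMeasurable _ _ hr), Pi.one_apply]
    _ ≤ coverMultiplicity f t r := ENNReal.sum_le_tsum _

theorem encard_le_liminf_coverMultiplicity [EMetricSpace X] {f : X → ℝ} {S : Set X}
    {t : ℕ → ℕ → Set X} {δ : ℕ → ℝ≥0∞} (hδ : Tendsto δ atTop (𝓝 0))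
    (hcov : ∀ k, S ⊆ ⋃ n, t k n) (hmesh : ∀ k n, ediam (t k n) ≤ δ k) (r : ℝ) :
    ((S ∩ f ⁻¹' {r}).encard : ℝ≥0∞) ≤ liminf (fun k => coverMultiplicity f (t k) r) atTop := by
  refine Set.toENNReal_encard_le_of_forall_finset fun F hF => ?_
  have hsep : ∀ᶠ k in atTop, ∀ x ∈ F, ∀ y ∈ F, x ≠ y → δ k < edist x y := by
    simp only [eventually_all_finset]
    intro x _ y _
    by_cases hxy : x = y
    · exact .of_forall fun _ h => absurd hxy h
    · exact (hδ.eventually (gt_mem_nhds (edist_pos.2 hxy))).mono fun _ h _ => h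
  refine le_liminf_of_le (by isBoundedDefault) (hsep.mono fun k hk => ?_)
  exact card_le_coverMultiplicity (hF.trans inter_subset_left |>.trans (hcov k))
    (fun x hx => (hF hx).2) (hmesh k) hk

end CoverMultiplicity

section Eilenberg

variable {X : Type*} [EMetricSpace X] [MeasurableSpace X] [BorelSpace X]

theorem exists_cover_tsum_ediam_lt {S : Set X} {c δ : ℝ≥0∞} (hS : μH[1] S < c) (hδ : 0 < δ) :
    ∃ t : ℕ → Set X, S ⊆ ⋃ n, t n ∧ (∀ n, ediam (t n) ≤ δ) ∧ ∑' n, ediam (t n) < c := by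
  have hδS : (⨅ (t : ℕ → Set X) (_ : S ⊆ ⋃ n, t n) (_ : ∀ n, ediam (t n) ≤ δ),
      ∑' n, ⨆ _ : (t n).Nonempty, ediam (t n) ^ (1 : ℝ)) < c := by
    refine lt_of_le_of_lt ?_ hS
    rw [Measure.hausdorffMeasure_apply]
    exact le_iSup₂ (f := fun (δ : ℝ≥0∞) (_ : 0 < δ) =>
      ⨅ (t : ℕ → Set X) (_ : S ⊆ ⋃ n, t n) (_ : ∀ n, ediam (t n) ≤ δ),
        ∑' n, ⨆ _ : (t n).Nonempty, ediam (t n) ^ (1 : ℝ)) δ hδ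
  simp only [iInf_lt_iff] at hδS
  obtain ⟨t, hcov, hmesh, hsum⟩ := hδS
  refine ⟨t, hcov, hmesh, lt_of_eq_of_lt (tsum_congr fun n => ?_) hsum⟩
  rcases (t n).eq_empty_or_nonempty with hempty | hne
  · simp [hempty]
  · rw [iSup_pos hne, ENNReal.rpow_one]

theorem lintegral_encard_inter_preimage_le {K : ℝ≥0} {f : X → ℝ} (hf : LipschitzWith K f)
    {S : Set X} {c : ℝ≥0∞} (hS : μH[1] S < c) :
    ∫⁻ r, ((S ∩ f ⁻¹' {r}).encard : ℝ≥0∞) ≤ K * c := by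
  choose t hcov hmesh hsum using fun k : ℕ =>
    exists_cover_tsum_ediam_lt hS (ENNReal.inv_pos.2 (ENNReal.natCast_ne_top k))
  calc ∫⁻ r, ((S ∩ f ⁻¹' {r}).encard : ℝ≥0∞)
      ≤ ∫⁻ r, liminf (fun k => coverMultiplicity f (t k) r) atTop :=
        lintegral_mono fun r =>
          encard_le_liminf_coverMultiplicity ENNReal.tendsto_inv_nat_nhds_zero hcov hmesh r
    _ ≤ liminf (fun k => ∫⁻ r, coverMultiplicity f (t k) r) atTop :=
        lintegral_liminf_le fun k => measurable_coverMultiplicity f (t k)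
    _ ≤ K * c := liminf_le_of_frequently_le' <| .of_forall fun k =>
        (lintegral_coverMultiplicity_le hf (t k)).trans (by gcongr; exact (hsum k).le)

end Eilenberg

theorem hausdorff_measure_ge_of_two_points_per_level_general
    {X : Type*} [MetricSpace X] [MeasurableSpace X] [BorelSpace X]
    (f : X → ℝ) (hf : LipschitzWith 1 f) (S : Set X) (R a : ℝ)
    (htwo : ∀ r ∈ Set.Ioo a (a + R),
      ∃ x ∈ S ∩ f ⁻¹' {r}, ∃ y ∈ S ∩ f ⁻¹' {r}, x ≠ y) :
    ENNReal.ofReal (2 * R) ≤ μH[1] S := by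
  have htwo_le : (Ioo a (a + R)).indicator (fun _ => 2) ≤
      fun r => ((S ∩ f ⁻¹' {r}).encard : ℝ≥0∞) := fun r => by
    by_cases hr : r ∈ Ioo a (a + R)
    · obtain ⟨x, hx, y, hy, hxy⟩ := htwo r hr
      simp only [indicator_of_mem hr]
      exact_mod_cast (encard_pair hxy).symm.trans_le (encard_le_encard (pair_subset hx hy))
    · simp [hr]
  refine le_of_forall_gt_imp_ge_of_dense fun c hSc => ?_
  calc ENNReal.ofReal (2 * R)
      = ∫⁻ r, (Ioo a (a + R)).indicator (fun _ => 2) r := by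
        rw [lintegral_indicator_const measurableSet_Ioo, Real.volume_Ioo, add_sub_cancel_left,
          ENNReal.ofReal_mul zero_le_two, ENNReal.ofReal_ofNat, mul_comm]
    _ ≤ ∫⁻ r, ((S ∩ f ⁻¹' {r}).encard : ℝ≥0∞) := lintegral_mono htwo_le
    _ ≤ 1 * c := lintegral_encard_inter_preimage_le hf hSc
    _ = c := one_mul c

theorem hausdorff_measure_ge_of_two_points_per_level
    {X : Type*} [MetricSpace X] [MeasurableSpace X] [BorelSpace X]
    (f : X → ℝ) (hf : LipschitzWith 1 f) (S : Set X) (R a : ℝ) (hR : 0 < R)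
    (htwo : ∀ r ∈ Set.Ioo a (a + R),
      ∃ x ∈ S ∩ f ⁻¹' {r}, ∃ y ∈ S ∩ f ⁻¹' {r}, x ≠ y) :
    ENNReal.ofReal (2 * R) ≤ μH[1] S :=
  hausdorff_measure_ge_of_two_points_per_level_general f hf S R a htwo
end
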